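/- (Banyaga's theorem in ℝ^{2n}.) Let F : ℝ^{2n} × ℝ → ℝ^{2n} be a smooth map such that F(z,0) = z for all z, and such that for each t the map f_t := F(·,t) is a bijection of ℝ^{2n} with smooth inverse whose Jacobian matrix D_z F(z,t) is symplectic for every z. Define the time-dependent vector field X(z,t) := ∂_t F(f_t⁻¹(z), t) and the function H(z,t) := −∫₀¹ σ( X(uz, t), z ) du, where σ(z,z') = (Jz)·z' is the standard symplectic form. Then (f_t) is the Hamiltonian flow of H: for all (z,t), ∂_t F(z,t) = J∇_z H(F(z,t), t). -/

import Mathlib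

open Matrix
open scoped RealInnerProductSpace

noncomputable section

/-- Phase space ℝ^{2n}, with coordinates indexed by `Fin n ⊕ Fin n` (the `x` and `p` blocks). -/
abbrev Phase (n : ℕ) := EuclideanSpace ℝ (Fin n ⊕ Fin n)

/-- The standard symplectic matrix `J = [[0, Iₙ],[−Iₙ, 0]]`. -/
def Jmat (n : ℕ) : Matrix (Fin n ⊕ Fin n) (Fin n ⊕ Fin n) ℝ :=
  Matrix.fromBlocks 0 1 (-1) 0

/-- The linear map `z ↦ Jz` on phase space. -/
def Jv {n : ℕ} (v : Phase n) : Phase n := WithLp.toLp 2 ((Jmat n).mulVec v)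

/-- The Jacobian matrix of a map of phase space at a point. -/
def jacMat {n : ℕ} (f : Phase n → Phase n) (z : Phase n) :
    Matrix (Fin n ⊕ Fin n) (Fin n ⊕ Fin n) ℝ :=
  LinearMap.toMatrix (EuclideanSpace.basisFun _ ℝ).toBasis
    (EuclideanSpace.basisFun _ ℝ).toBasis (fderiv ℝ f z).toLinearMap

/-- The standard symplectic form `σ(z,z') = (Jz)·z'` on phase space. -/
def symplForm {n : ℕ} (z z' : Phase n) : ℝ := ⟪Jv z, z'⟫

/-! ### Auxiliary infrastructure -/

section Aux

abbrev phv {n : ℕ} (v : (Fin n ⊕ Fin n) → ℝ) : Phase n := WithLp.toLp 2 v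

lemma inner_mulVec_left {n : ℕ} (M : Matrix (Fin n ⊕ Fin n) (Fin n ⊕ Fin n) ℝ)
    (a b : Phase n) : ⟪phv (M.mulVec a), b⟫ = ⟪a, phv (Mᵀ.mulVec b)⟫ := by
  simp only [PiLp.inner_apply, RCLike.inner_apply, starRingEnd_apply, star_trivial, phv,
    Matrix.mulVec, dotProduct, Matrix.transpose_apply, Finset.sum_mul, Finset.mul_sum]
  rw [Finset.sum_comm]
  apply Finset.sum_congr rfl; intro i _
  apply Finset.sum_congr rfl; intro j _
  ring

lemma Jmat_transpose (n : ℕ) : (Jmat n)ᵀ = -(Jmat n) := by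
  ext i j
  rcases i with i|i <;> rcases j with j|j <;>
    simp [Jmat, Matrix.fromBlocks, Matrix.one_apply, eq_comm]

lemma Jmat_mul_Jmat (n : ℕ) : Jmat n * Jmat n = -1 := by
  simp only [Jmat, Matrix.fromBlocks_multiply]
  ext i j
  rcases i with i|i <;> rcases j with j|j <;>
    simp [Matrix.fromBlocks, Matrix.one_apply, eq_comm]

lemma Jv_Jv {n : ℕ} (v : Phase n) : Jv (Jv v) = -v := by
  show phv ((Jmat n).mulVec ((Jmat n).mulVec v)) = -v
  rw [Matrix.mulVec_mulVec, Jmat_mul_Jmat]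
  show phv ((-1 : Matrix _ _ ℝ).mulVec v) = -v
  ext i
  simp [Matrix.neg_mulVec, Matrix.one_mulVec]

lemma inner_Jv_left {n : ℕ} (a b : Phase n) : ⟪Jv a, b⟫ = -⟪a, Jv b⟫ := by
  show ⟪phv ((Jmat n).mulVec a), b⟫ = -⟪a, phv ((Jmat n).mulVec b)⟫
  rw [inner_mulVec_left, Jmat_transpose]
  have : phv ((-Jmat n).mulVec b) = -phv ((Jmat n).mulVec b) := by
    ext i; simp [Matrix.neg_mulVec]
  rw [this, inner_neg_right]

lemma jacMat_mulVec {n : ℕ} (f : Phase n → Phase n) (z v : Phase n) :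
    phv ((jacMat f z).mulVec v) = fderiv ℝ f z v := by
  have h := LinearMap.toMatrix_mulVec_repr (EuclideanSpace.basisFun (Fin n ⊕ Fin n) ℝ).toBasis
      (EuclideanSpace.basisFun (Fin n ⊕ Fin n) ℝ).toBasis (fderiv ℝ f z).toLinearMap v
  ext i
  have h' := congrFun h i
  have hr : ⇑((EuclideanSpace.basisFun (Fin n ⊕ Fin n) ℝ).toBasis.repr v) = v.ofLp :=
    funext fun j => rfl
  rw [hr] at h'
  simpa [jacMat] using h'

/-- `J` as a continuous linear map. -/
def JL (n : ℕ) : Phase n →L[ℝ] Phase n :=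
  LinearMap.toContinuousLinearMap (Matrix.toEuclideanLin (Jmat n))

lemma JL_apply {n : ℕ} (v : Phase n) : JL n v = Jv v := by
  ext i; simp [JL, Jv]

lemma Jv_neg {n : ℕ} (v : Phase n) : Jv (-v) = -Jv v := by
  rw [← JL_apply, ← JL_apply, map_neg]

end Aux

section Poincare

open intervalIntegral MeasureTheory

variable {E : Type*} [NormedAddCommGroup E] [InnerProductSpace ℝ E] [FiniteDimensional ℝ E]

/-- Radial primitive of a closed 1-form has the expected gradient. -/
lemma poincare_gradient (α : E → E) (hα : ContDiff ℝ (⊤ : ℕ∞) α)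
    (hsym : ∀ (y a b : E), ⟪fderiv ℝ α y a, b⟫ = ⟪a, fderiv ℝ α y b⟫) (w : E) :
    HasGradientAt (fun z => ∫ u in (0:ℝ)..1, ⟪α (u • z), z⟫) (α w) w := by
  set Dα : E → (E →L[ℝ] E) := fderiv ℝ α with hDα
  have hDαc : Continuous Dα := (hα.fderiv_right (m := (⊤ : ℕ∞)) (by simp)).continuous
  have hαc : Continuous α := hα.continuous
  set g : E → ℝ → E := fun x u => α (u • x) + u • (Dα (u • x) x) with hg
  have hgc : Continuous fun p : E × ℝ => g p.1 p.2 := by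
    apply Continuous.add
    · exact hαc.comp ((continuous_snd.smul continuous_fst))
    · exact continuous_snd.smul ((hDαc.comp (continuous_snd.smul continuous_fst)).clm_apply
        continuous_fst)
  set G' : E → ℝ → (E →L[ℝ] ℝ) := fun x u => innerSL ℝ (g x u) with hG'
  have hdiff : ∀ (u : ℝ) (x : E), HasFDerivAt (fun y => (⟪α (u • y), y⟫ : ℝ)) (G' x u) x := by
    intro u x
    have h1 : HasFDerivAt (fun y : E => u • y) (u • ContinuousLinearMap.id ℝ E) x :=
      (u • ContinuousLinearMap.id ℝ E).hasFDerivAt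
    have h2 : HasFDerivAt (fun y : E => α (u • y))
        ((Dα (u • x)).comp (u • ContinuousLinearMap.id ℝ E)) x :=
      ((hα.differentiable (by simp) (u • x)).hasFDerivAt).comp x h1
    have h3 := h2.inner ℝ (hasFDerivAt_id x)
    have heq : G' x u = (fderivInnerCLM ℝ (α (u • x), id x)).comp
        (((Dα (u • x)).comp (u • ContinuousLinearMap.id ℝ E)).prod (ContinuousLinearMap.id ℝ E)) := by
      ext v
      have e1 : (Dα (u • x)) (u • v) = u • (Dα (u • x)) v := (Dα (u • x)).map_smul u v
      simp only [hG', innerSL_apply_apply, ContinuousLinearMap.coe_comp', Function.comp_apply,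
        ContinuousLinearMap.prod_apply, fderivInnerCLM_apply, ContinuousLinearMap.smul_apply,
        ContinuousLinearMap.id_apply, hg, id_eq]
      rw [e1, inner_add_left, real_inner_smul_left, real_inner_smul_left, hsym (u • x) v x,
        real_inner_comm, real_inner_comm v ((Dα (u • x)) x)]
    rw [heq]
    exact h3
  have hftc : (∫ u in (0:ℝ)..1, g w u) = α w := by
    have hderiv : ∀ u ∈ Set.uIcc (0:ℝ) 1, HasDerivAt (fun v : ℝ => v • α (v • w)) (g w u) u := by
      intro u _
      have hc : HasDerivAt (fun v : ℝ => α (v • w)) (Dα (u • w) w) u := by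
        have hsm : HasDerivAt (fun v : ℝ => v • w) w u := by
          simpa using (hasDerivAt_id u).smul_const w
        exact ((hα.differentiable (by simp) (u • w)).hasFDerivAt).comp_hasDerivAt u hsm
      have := (hasDerivAt_id' u).smul hc
      simpa [hg, add_comm, Pi.smul_def'] using this
    have hint : IntervalIntegrable (g w) volume 0 1 :=
      (hgc.comp (Continuous.prodMk_right w)).intervalIntegrable 0 1
    have := integral_eq_sub_of_hasDerivAt hderiv hint
    simpa using this
  have key : HasFDerivAt (fun x => ∫ u in (0:ℝ)..1, (⟪α (u • x), x⟫ : ℝ))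
      (∫ u in (0:ℝ)..1, G' w u) w := by
    obtain ⟨p₀, -, hp₀⟩ := ((isCompact_closedBall w 1).prod
      (isCompact_Icc (a := (0:ℝ)) (b := 1))).exists_isMaxOn
      ⟨(w, 0), ⟨Metric.mem_closedBall_self zero_le_one, ⟨le_refl 0, by norm_num⟩⟩⟩
      ((continuous_norm.comp hgc).continuousOn)
    set C : ℝ := ‖g p₀.1 p₀.2‖ with hC
    apply intervalIntegral.hasFDerivAt_integral_of_dominated_of_fderiv_le
      (s := Metric.ball w 1) (bound := fun _ => C) (Metric.ball_mem_nhds w one_pos)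
    · filter_upwards with x
      exact ((hαc.comp ((continuous_id.smul continuous_const))).inner
        continuous_const).aestronglyMeasurable
    · exact ((hαc.comp ((continuous_id.smul continuous_const))).inner
        continuous_const).intervalIntegrable 0 1
    · exact ((innerSL ℝ (E := E)).continuous.comp
        (hgc.comp (Continuous.prodMk_right w))).aestronglyMeasurable
    · filter_upwards with u hu x hx
      rw [Set.uIoc_of_le (by norm_num : (0:ℝ) ≤ 1)] at hu
      have hx' : (x, u) ∈ Metric.closedBall w 1 ×ˢ Set.Icc (0:ℝ) 1 :=
        ⟨Metric.ball_subset_closedBall hx, ⟨le_of_lt hu.1, hu.2⟩⟩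
      calc ‖G' x u‖ = ‖g x u‖ := by rw [hG']; exact innerSL_apply_norm (𝕜 := ℝ) _
        _ ≤ C := hp₀ hx'
    · exact intervalIntegrable_const
    · filter_upwards with u _ x _
      exact hdiff u x
  have hintg : IntervalIntegrable (g w) volume 0 1 :=
    (hgc.comp (Continuous.prodMk_right w)).intervalIntegrable 0 1
  have hG'int : (∫ u in (0:ℝ)..1, G' w u) = innerSL ℝ (α w) := by
    rw [hG']
    rw [(innerSL ℝ (E := E)).intervalIntegral_comp_comm hintg, hftc]
  rw [hG'int] at key
  have htd : (InnerProductSpace.toDual ℝ E) (α w) = innerSL ℝ (α w) := by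
    ext v; simp [InnerProductSpace.toDual_apply_apply]
  rw [hasGradientAt_iff_hasFDerivAt, htd]
  exact key

end Poincare

/-- **Banyaga's theorem in ℝ^{2n}.** Let `F(z,t)` be a smooth family of canonical
transformations of ℝ^{2n} (each `f_t = F(·,t)` a bijection with smooth inverse and
symplectic Jacobian), with `f₀ = id`. Set `X(z,t) = ∂_t F(f_t⁻¹(z), t)` and
`H(z,t) = −∫₀¹ σ(X(uz,t), z) du`. Then `(f_t)` is the Hamiltonian flow of `H`. -/
theorem banyaga_theorem {n : ℕ}
    (F : Phase n → ℝ → Phase n)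
    (hF : ContDiff ℝ (⊤ : ℕ∞) (fun q : Phase n × ℝ => F q.1 q.2))
    (hF0 : ∀ z : Phase n, F z 0 = z)
    (Finv : Phase n → ℝ → Phase n)
    (hFinv : ∀ t, ContDiff ℝ (⊤ : ℕ∞) (fun z => Finv z t))
    (hinv₁ : ∀ (z : Phase n) (t : ℝ), Finv (F z t) t = z)
    (hinv₂ : ∀ (z : Phase n) (t : ℝ), F (Finv z t) t = z)
    (hsymp : ∀ (z : Phase n) (t : ℝ),
      (jacMat (fun w => F w t) z)ᵀ * Jmat n * jacMat (fun w => F w t) z = Jmat n)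
    (X : Phase n → ℝ → Phase n)
    (hX : ∀ (z : Phase n) (t : ℝ), X z t = deriv (fun s => F (Finv z t) s) t)
    (H : Phase n → ℝ → ℝ)
    (hH : ∀ (z : Phase n) (t : ℝ),
      H z t = -∫ u in (0:ℝ)..1, symplForm (X (u • z) t) z) :
    ∀ (z : Phase n) (t : ℝ),
      HasDerivAt (fun s => F z s) (Jv (gradient (fun w => H w t) (F z t))) t := by
  have hΦdiffble := hF.differentiable (by simp)
  set D1 : Phase n × ℝ → (Phase n × ℝ →L[ℝ] Phase n) :=
    fderiv ℝ (fun q : Phase n × ℝ => F q.1 q.2) with hD1def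
  have hD1 : ContDiff ℝ (⊤ : ℕ∞) D1 := hF.fderiv_right (m := (⊤ : ℕ∞)) (by simp)
  have hΦdiff : ∀ q, HasFDerivAt (fun q : Phase n × ℝ => F q.1 q.2) (D1 q) q :=
    fun q => (hΦdiffble q).hasFDerivAt
  -- the time derivative of the flow
  have hcurve : ∀ (z : Phase n) (t : ℝ),
      HasDerivAt (fun s => F z s) (D1 (z, t) ((0 : Phase n), (1 : ℝ))) t := by
    intro z t
    have hc : HasDerivAt (fun s : ℝ => ((z : Phase n), s)) ((0 : Phase n), (1 : ℝ)) t :=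
      (hasDerivAt_const t z).prodMk (hasDerivAt_id t)
    exact (hΦdiff (z, t)).comp_hasDerivAt t hc
  have hX_F : ∀ (z : Phase n) (t : ℝ), X (F z t) t = D1 (z, t) ((0 : Phase n), (1 : ℝ)) := by
    intro z t
    rw [hX, hinv₁]
    exact (hcurve z t).deriv
  -- the spatial derivative of the flow
  have hSrep : ∀ (z : Phase n) (t : ℝ), HasFDerivAt (fun w => F w t)
      ((D1 (z, t)).comp ((ContinuousLinearMap.id ℝ (Phase n)).prod 0)) z := by
    intro z t
    have hc : HasFDerivAt (fun w : Phase n => (w, t))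
        ((ContinuousLinearMap.id ℝ (Phase n)).prod 0) z :=
      (hasFDerivAt_id z).prodMk (hasFDerivAt_const t z)
    exact (hΦdiff (z, t)).comp z hc
  -- the symplectic condition in bilinear form
  have hsympB : ∀ (z : Phase n) (t : ℝ) (v v' : Phase n),
      ⟪Jv (D1 (z, t) (v, 0)), D1 (z, t) (v', 0)⟫ = ⟪Jv v, v'⟫ := by
    intro z t v v'
    set S := jacMat (fun w => F w t) z with hS
    have hmv : ∀ u : Phase n, phv (S.mulVec u) = D1 (z, t) (u, 0) := by
      intro u
      rw [hS, jacMat_mulVec, (hSrep z t).fderiv]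
      simp
    rw [← hmv v, ← hmv v']
    show ⟪phv ((Jmat n).mulVec (S.mulVec v)), phv (S.mulVec v')⟫ = ⟪Jv v, v'⟫
    rw [Matrix.mulVec_mulVec, inner_mulVec_left, Matrix.mulVec_mulVec]
    have hmat : (Jmat n * S)ᵀ * S = -(Jmat n) := by
      rw [Matrix.transpose_mul, Jmat_transpose]
      calc Sᵀ * (-(Jmat n)) * S = -(Sᵀ * Jmat n * S) := by
            rw [Matrix.mul_neg, Matrix.neg_mul]
        _ = -(Jmat n) := by rw [hsymp z t]
    rw [hmat]
    have : phv ((-(Jmat n)).mulVec v') = -(Jv v') := by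
      ext i; simp [Matrix.neg_mulVec, Jv]
    rw [this, inner_neg_right, ← inner_Jv_left]
  -- symmetry of the derivative of the symplectic vector field
  have symY : ∀ (y a b : Phase n) (t : ℝ),
      ⟪Jv (fderiv ℝ (fun w => X w t) y a), b⟫ + ⟪Jv a, fderiv ℝ (fun w => X w t) y b⟫ = 0 := by
    intro y a b t
    set z0 : Phase n := Finv y t with hz0
    have hy : F z0 t = y := hinv₂ y t
    set S' : Phase n →L[ℝ] Phase n :=
      (D1 (z0, t)).comp ((ContinuousLinearMap.id ℝ (Phase n)).prod 0) with hS'def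
    have hS : HasFDerivAt (fun w => F w t) S' z0 := hSrep z0 t
    set DYy : Phase n →L[ℝ] Phase n := fderiv ℝ (fun w => X w t) y with hDYy
    have hYd : HasFDerivAt (fun w => X w t) DYy y := by
      apply DifferentiableAt.hasFDerivAt
      have : (fun w => X w t) = fun w => D1 (Finv w t, t) ((0 : Phase n), (1 : ℝ)) := by
        funext w
        rw [hX]
        exact (hcurve (Finv w t) t).deriv
      rw [this]
      have hXXc : ContDiff ℝ (⊤ : ℕ∞) (fun q : Phase n × ℝ => D1 q ((0 : Phase n), (1 : ℝ))) :=
        (ContinuousLinearMap.apply ℝ (Phase n) ((0 : Phase n), (1 : ℝ))).contDiff.comp hD1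
      exact ((hXXc.comp ((hFinv t).prodMk contDiff_const)).differentiable (by simp)).differentiableAt
    -- the key pointwise identity at z0
    set D2 : Phase n × ℝ →L[ℝ] (Phase n × ℝ →L[ℝ] Phase n) := fderiv ℝ D1 (z0, t) with hD2def
    have hD2 : HasFDerivAt D1 D2 (z0, t) := ((hD1.differentiable (by simp)) (z0, t)).hasFDerivAt
    have hsym2 := second_derivative_symmetric hΦdiff hD2
    have claim1 : ∀ v v' : Phase n,
        ⟪Jv (DYy (S' v)), S' v'⟫ + ⟪Jv (S' v), DYy (S' v')⟫ = 0 := by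
      intro v v'
      -- derivative in t of s ↦ D1 (z0, s) (v, 0)
      have hc : HasDerivAt (fun s : ℝ => ((z0 : Phase n), s)) ((0 : Phase n), (1 : ℝ)) t :=
        (hasDerivAt_const t z0).prodMk (hasDerivAt_id t)
      have hD1s : HasDerivAt (fun s => D1 (z0, s)) (D2 ((0 : Phase n), (1 : ℝ))) t :=
        hD2.comp_hasDerivAt t hc
      have hA : HasDerivAt (fun s => D1 (z0, s) (v, 0))
          (D2 ((0 : Phase n), (1 : ℝ)) (v, 0)) t := by
        simpa using hD1s.clm_apply (hasDerivAt_const t ((v : Phase n), (0 : ℝ)))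
      have hB : HasDerivAt (fun s => D1 (z0, s) (v', 0))
          (D2 ((0 : Phase n), (1 : ℝ)) (v', 0)) t := by
        simpa using hD1s.clm_apply (hasDerivAt_const t ((v' : Phase n), (0 : ℝ)))
      have hJA : HasDerivAt (fun s => Jv (D1 (z0, s) (v, 0)))
          (Jv (D2 ((0 : Phase n), (1 : ℝ)) (v, 0))) t := by
        have := (JL n).hasFDerivAt.comp_hasDerivAt t hA
        simpa [JL_apply, Function.comp_def] using this
      have hφ := hJA.inner ℝ hB
      have hconst : (fun s => (⟪Jv (D1 (z0, s) (v, 0)), D1 (z0, s) (v', 0)⟫ : ℝ)) =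
          fun _ => (⟪Jv v, v'⟫ : ℝ) := funext fun s => hsympB z0 s v v'
      rw [hconst] at hφ
      have hzero : (⟪Jv (D1 (z0, t) (v, 0)), D2 ((0 : Phase n), (1 : ℝ)) (v', 0)⟫
          + ⟪Jv (D2 ((0 : Phase n), (1 : ℝ)) (v, 0)), D1 (z0, t) (v', 0)⟫ : ℝ) = 0 :=
        hφ.unique (hasDerivAt_const t _)
      -- identify D2 (0,1) (v,0) with DYy (S' v)
      have hswap : ∀ u : Phase n,
          D2 ((0 : Phase n), (1 : ℝ)) (u, 0) = DYy (S' u) := by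
        intro u
        have e : ((Phase n × ℝ) →L[ℝ] Phase n) →L[ℝ] Phase n :=
          ContinuousLinearMap.apply ℝ (Phase n) ((0 : Phase n), (1 : ℝ))
        have hD1w : HasFDerivAt (fun w => D1 (w, t))
            (D2.comp ((ContinuousLinearMap.id ℝ (Phase n)).prod 0)) z0 :=
          hD2.comp z0 ((hasFDerivAt_id z0).prodMk (hasFDerivAt_const t z0))
        have hXXw : HasFDerivAt (fun w => D1 (w, t) ((0 : Phase n), (1 : ℝ)))
            ((ContinuousLinearMap.apply ℝ (Phase n) ((0 : Phase n), (1 : ℝ))).comp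
              (D2.comp ((ContinuousLinearMap.id ℝ (Phase n)).prod 0))) z0 :=
          (ContinuousLinearMap.apply ℝ (Phase n)
            ((0 : Phase n), (1 : ℝ))).hasFDerivAt.comp z0 hD1w
        have hYF : HasFDerivAt (fun w => X (F w t) t) (DYy.comp S') z0 := by
          exact (hy.symm ▸ hYd : HasFDerivAt (fun w => X w t) DYy (F z0 t)).comp z0 hS
        have hfun : (fun w => X (F w t) t) =
            fun w => D1 (w, t) ((0 : Phase n), (1 : ℝ)) := funext fun w => hX_F w t
        rw [hfun] at hYF
        have huniq := hXXw.unique hYF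
        have happ := congrFun (congrArg DFunLike.coe huniq) u
        rw [hsym2 ((0 : Phase n), (1 : ℝ)) (u, 0)]
        simpa using happ
      rw [hswap v, hswap v'] at hzero
      have hSv : ∀ u : Phase n, S' u = D1 (z0, t) (u, 0) := by
        intro u; simp [hS'def]
      rw [hSv v, hSv v'] at hzero ⊢
      linarith [hzero]
    -- surjectivity of S'
    have hDFinv : HasFDerivAt (fun w => Finv w t) (fderiv ℝ (fun w => Finv w t) y) y :=
      (((hFinv t).differentiable (by simp)) y).hasFDerivAt
    have hSD : S'.comp (fderiv ℝ (fun w => Finv w t) y) = ContinuousLinearMap.id ℝ (Phase n) := by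
      have hcomp : HasFDerivAt (fun y' => F (Finv y' t) t)
          (S'.comp (fderiv ℝ (fun w => Finv w t) y)) y := HasFDerivAt.comp (g := fun w => F w t) y hS hDFinv
      have hid : (fun y' => F (Finv y' t) t) = id := funext fun y' => hinv₂ y' t
      rw [hid] at hcomp
      exact hcomp.unique (hasFDerivAt_id y)
    have hsurj : ∀ u : Phase n, S' (fderiv ℝ (fun w => Finv w t) y u) = u := by
      intro u
      have := congrFun (congrArg DFunLike.coe hSD) u
      simpa using this
    have := claim1 (fderiv ℝ (fun w => Finv w t) y a) (fderiv ℝ (fun w => Finv w t) y b)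
    rwa [hsurj a, hsurj b] at this
  -- now fix z and t and compute the gradient
  intro z t
  set α : Phase n → Phase n := fun y => -(Jv (X y t)) with hα
  have hYsm : ContDiff ℝ (⊤ : ℕ∞) (fun w => X w t) := by
    have : (fun w => X w t) = fun w => D1 (Finv w t, t) ((0 : Phase n), (1 : ℝ)) := by
      funext w
      rw [hX]
      exact (hcurve (Finv w t) t).deriv
    rw [this]
    have hXXc : ContDiff ℝ (⊤ : ℕ∞) (fun q : Phase n × ℝ => D1 q ((0 : Phase n), (1 : ℝ))) :=
      (ContinuousLinearMap.apply ℝ (Phase n) ((0 : Phase n), (1 : ℝ))).contDiff.comp hD1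
    exact hXXc.comp ((hFinv t).prodMk contDiff_const)
  have hαsm : ContDiff ℝ (⊤ : ℕ∞) α := by
    have : α = fun y => -(JL n (X y t)) := by funext y; rw [hα, JL_apply]
    rw [this]
    exact ((JL n).contDiff.comp hYsm).neg
  have hαderiv : ∀ y : Phase n, fderiv ℝ α y =
      -((JL n).comp (fderiv ℝ (fun w => X w t) y)) := by
    intro y
    have hYd : HasFDerivAt (fun w => X w t) (fderiv ℝ (fun w => X w t) y) y :=
      ((hYsm.differentiable (by simp)) y).hasFDerivAt
    have h1 : HasFDerivAt (fun y' => JL n (X y' t))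
        ((JL n).comp (fderiv ℝ (fun w => X w t) y)) y :=
      (JL n).hasFDerivAt.comp y hYd
    have h2 : HasFDerivAt α (-((JL n).comp (fderiv ℝ (fun w => X w t) y))) y := by
      have h3 := h1.neg
      have hfun : α = fun y' => -(JL n (X y' t)) := by
        funext y'; rw [hα, JL_apply]
      rw [hfun]
      exact h3
    exact h2.fderiv
  have hαsym : ∀ (y a b : Phase n), ⟪fderiv ℝ α y a, b⟫ = ⟪a, fderiv ℝ α y b⟫ := by
    intro y a b
    rw [hαderiv y]
    have hs := symY y a b t
    set DY := fderiv ℝ (fun w => X w t) y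
    have l1 : (-((JL n).comp DY)) a = -(Jv (DY a)) := by simp [JL_apply]
    have l2 : (-((JL n).comp DY)) b = -(Jv (DY b)) := by simp [JL_apply]
    rw [l1, l2, inner_neg_left, inner_neg_right]
    have e1 : ⟪Jv (DY a), b⟫ = -⟪Jv a, DY b⟫ := by linarith [hs]
    rw [e1, inner_Jv_left a (DY b)]
    ring
  -- rewrite H in terms of α
  have hHfun : (fun w => H w t) = fun w => ∫ u in (0:ℝ)..1, ⟪α (u • w), w⟫ := by
    funext w
    rw [hH, ← intervalIntegral.integral_neg]
    congr 1
    funext u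
    rw [hα]
    show -(symplForm (X (u • w) t) w) = ⟪-(Jv (X (u • w) t)), w⟫
    rw [inner_neg_left]
    rfl
  have hgrad : gradient (fun w => H w t) (F z t) = α (F z t) := by
    rw [hHfun]
    exact (poincare_gradient α hαsm hαsym (F z t)).gradient
  rw [hgrad]
  have : Jv (α (F z t)) = D1 (z, t) ((0 : Phase n), (1 : ℝ)) := by
    rw [hα]
    show Jv (-(Jv (X (F z t) t))) = _
    rw [Jv_neg, Jv_Jv, neg_neg]
    exact hX_F z t
  rw [this]
  exact hcurve z t

end
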